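/- For every odd k ≥ 25, the Majority predicate Maj_k : {-1,1}^k → {0,1} (Maj_k(z) = 1 iff Σ_{i=1}^k z_i ≥ 1) is (9/73)-far from supporting a 4-wise uniform distribution; in particular it does not support any 4-wise uniform distribution. -/
import Mathlib

/-! Auxiliary material for the proof that Majority is far from supporting a
4-wise uniform distribution. -/

private lemma certA (s r : ℝ) (hs : 0 ≤ s) (hr : 0 ≤ r) :
    0 ≤ 12*s^4 - 20*s^3*r - 72*s^2*r^2 + 124*s*r^3 + 9*r^4 := by
  nlinarith [sq_nonneg (s^2 - 2087/1250*s*r - 2705569/3125000*r^2),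
    mul_nonneg (mul_nonneg hs hr) (sq_nonneg (112/25*s - 189/20*r)),
    mul_nonneg hs (pow_nonneg hr 3), pow_nonneg hr 4]

private lemma lemA (s r : ℝ) (hs : 1 ≤ s) (hr : 5 ≤ r) :
    27/4*r^4 ≤ 3*s^4 - 5*r*s^3 + (24-18*r^2)*s^2 + (31*r^3-10*r)*s + (9*r^4-18*r^2) := by
  have hs0 : (0:ℝ) ≤ s := by linarith
  have hr0 : (0:ℝ) ≤ r := by linarith
  have hr2 : (25:ℝ) ≤ r^2 := by nlinarith
  rcases le_or_gt (6*s) (7*r) with h | h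
  · have h1 : 0 ≤ 12*s^3 - 20*s^2*r - 72*s*r^2 + 124*r^3 := by
      nlinarith [mul_nonneg (mul_nonneg hs0 hs0) hs0, mul_nonneg hs0 hr0,
        mul_nonneg (mul_nonneg hr0 hr0) hr0, mul_nonneg (mul_nonneg hs0 hs0) hr0,
        mul_nonneg (mul_nonneg hs0 hr0) hr0,
        mul_nonneg (mul_nonneg (by linarith : (0:ℝ) ≤ 7*r - 6*s) hr0) hr0,
        mul_nonneg (mul_nonneg (by linarith : (0:ℝ) ≤ 7*r - 6*s) hs0) hr0,
        mul_nonneg (mul_nonneg (by linarith : (0:ℝ) ≤ 7*r - 6*s) hs0) hs0]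
    have h2 : 0 ≤ s * (12*s^3 - 20*s^2*r - 72*s*r^2 + 124*r^3) := mul_nonneg hs0 h1
    nlinarith [mul_nonneg (mul_nonneg hr0 hr0) (by linarith : (0:ℝ) ≤ 7*r - 6*s),
      mul_nonneg hs0 hr0, sq_nonneg r, sq_nonneg (r^2 - 25)]
  · have h1 := certA s r hs0 hr0
    have h6 : (0:ℝ) ≤ 6*s - 7*r := by linarith
    have h2 : 0 ≤ 96*s^2 - 40*s*r - 72*r^2 := by
      nlinarith [sq_nonneg (6*s - 7*r), mul_nonneg h6 hr0, sq_nonneg r]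
    nlinarith [sq_nonneg r, mul_nonneg hs0 hr0]

private lemma lemB (s r : ℝ) (hr : 5 ≤ r) :
    -(48*r^4) ≤ 3*s^4 - 5*r*s^3 + (24-18*r^2)*s^2 + (31*r^3-10*r)*s + (9*r^4-18*r^2) := by
  have hr0 : (0:ℝ) ≤ r := by linarith
  have hr2 : (25:ℝ) ≤ r^2 := by nlinarith
  nlinarith [sq_nonneg (s^2 - 5/6*s*r - 177133/45000*r^2),
    sq_nonneg (47/25*s*r + 101867/33840*r^2),
    sq_nonneg (24*s - 5*r),
    mul_nonneg (by linarith : (0:ℝ) ≤ r^2 - 25) (sq_nonneg r), sq_nonneg r]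

/-- The ±1 character value of a single bit. -/
private def chi {k : ℕ} (z : Fin k → Bool) (i : Fin k) : ℝ := if z i then 1 else -1

private lemma chi_mul_self {k : ℕ} (z : Fin k → Bool) (i : Fin k) : chi z i * chi z i = 1 := by
  by_cases h : z i <;> simp [chi, h]

/-- Expectation of any nonempty character of degree at most 4 vanishes. -/
private lemma E0 {k : ℕ} (hk : 4 ≤ k) {D : (Fin k → Bool) → ℝ}
    (h4 : ∀ T : Finset (Fin k), T.card = 4 → ∀ y : Fin k → Bool,
      ∑ z ∈ Finset.univ.filter (fun z : Fin k → Bool => ∀ i ∈ T, z i = y i), D z = 1 / 2 ^ 4)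
    {U : Finset (Fin k)} (hne : U.Nonempty) (hU : U.card ≤ 4) :
    ∑ z, D z * ∏ i ∈ U, chi z i = 0 := by
  classical
  obtain ⟨T, hUT, -, hT4⟩ :=
    Finset.exists_subsuperset_card_eq (Finset.subset_univ U) hU
      (by simpa using hk)
  obtain ⟨u₀, hu₀⟩ := hne
  have hu₀T : u₀ ∈ T := hUT hu₀
  set mask : (Fin k → Bool) → (Fin k → Bool) := fun z i => if i ∈ T then z i else false
    with hmaskdef
  have key : ∀ y : Fin k → Bool,
      (∑ z ∈ Finset.univ.filter (fun z => mask z = y), D z * ∏ i ∈ U, chi z i)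
        = (if mask y = y then (∏ i ∈ U, chi y i) * (1 / 2 ^ 4) else 0) := by
    intro y
    by_cases hy : mask y = y
    · rw [if_pos hy]
      have hset : Finset.univ.filter (fun z => mask z = y)
          = Finset.univ.filter (fun z : Fin k → Bool => ∀ i ∈ T, z i = y i) := by
        ext z
        simp only [Finset.mem_filter, Finset.mem_univ, true_and]
        constructor
        · intro h i hi
          rw [← h]
          simp [hmaskdef, hi]
        · intro h
          funext i
          by_cases hi : i ∈ T
          · simp [hmaskdef, hi, h i hi]
          · have hyi : y i = false := by rw [← hy]; simp [hmaskdef, hi]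
            simp [hmaskdef, hi, hyi]
      rw [hset]
      have hconst : ∀ z ∈ Finset.univ.filter (fun z : Fin k → Bool => ∀ i ∈ T, z i = y i),
          D z * ∏ i ∈ U, chi z i = D z * ∏ i ∈ U, chi y i := by
        intro z hz
        simp only [Finset.mem_filter, Finset.mem_univ, true_and] at hz
        congr 1
        exact Finset.prod_congr rfl fun i hi => by simp [chi, hz i (hUT hi)]
      rw [Finset.sum_congr rfl hconst, ← Finset.sum_mul, h4 T hT4 y, mul_comm]
    · rw [if_neg hy]
      apply Finset.sum_eq_zero
      intro z hz
      exfalso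
      simp only [Finset.mem_filter, Finset.mem_univ, true_and] at hz
      apply hy
      funext i
      by_cases hi : i ∈ T
      · rw [← hz]; simp [hmaskdef, hi]
      · rw [← hz]; simp [hmaskdef, hi]
  have hfib : (∑ z, D z * ∏ i ∈ U, chi z i)
      = ∑ y, (if mask y = y then (∏ i ∈ U, chi y i) * (1 / 2 ^ 4) else 0) := by
    rw [← Finset.sum_fiberwise Finset.univ mask (fun z => D z * ∏ i ∈ U, chi z i)]
    exact Finset.sum_congr rfl fun y _ => key y
  rw [hfib]
  have hflip_mask : ∀ y : Fin k → Bool,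
      mask (Function.update y u₀ (!(y u₀))) = Function.update (mask y) u₀ (!(y u₀)) := by
    intro y; funext i
    by_cases hi : i = u₀
    · subst hi; simp [hmaskdef, hu₀T]
    · simp [hmaskdef, Function.update_of_ne hi]
  have hcond : ∀ y : Fin k → Bool,
      (mask (Function.update y u₀ (!(y u₀))) = Function.update y u₀ (!(y u₀)))
        ↔ (mask y = y) := by
    intro y
    rw [hflip_mask]
    constructor
    · intro h
      funext i
      by_cases hi : i = u₀
      · subst hi; simp [hmaskdef, hu₀T]
      · have h2 := congrFun h i
        rwa [Function.update_of_ne hi, Function.update_of_ne hi] at h2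
    · intro h
      rw [h]
  have hprod : ∀ y : Fin k → Bool,
      ∏ i ∈ U, chi (Function.update y u₀ (!(y u₀))) i = -∏ i ∈ U, chi y i := by
    intro y
    rw [← Finset.mul_prod_erase U (fun i => chi (Function.update y u₀ (!(y u₀))) i) hu₀,
        ← Finset.mul_prod_erase U (fun i => chi y i) hu₀]
    have h1 : ∀ i ∈ U.erase u₀, chi (Function.update y u₀ (!(y u₀))) i = chi y i := by
      intro i hi
      have hne' : i ≠ u₀ := (Finset.mem_erase.mp hi).1
      simp [chi, Function.update_of_ne hne']
    rw [Finset.prod_congr rfl h1]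
    have h2 : chi (Function.update y u₀ (!(y u₀))) u₀ = -chi y u₀ := by
      by_cases h : y u₀ <;> simp [chi, h]
    rw [h2]; ring
  apply Finset.sum_ninvolution (fun y => Function.update y u₀ (!(y u₀)))
  · intro y
    by_cases hy : mask y = y
    · rw [if_pos hy, if_pos ((hcond y).mpr hy), hprod]; ring
    · rw [if_neg hy, if_neg (fun h => hy ((hcond y).mp h))]; norm_num
  · intro y _ hcontra
    have h := congrFun hcontra u₀
    simp only [Function.update_self] at h
    cases hyu : y u₀ <;> rw [hyu] at h <;> simp at h
  · intro y; exact Finset.mem_univ _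
  · intro y
    funext i
    by_cases hi : i = u₀
    · subst hi; simp
    · simp [Function.update_of_ne hi]

section Moments

variable {k : ℕ} {D : (Fin k → Bool) → ℝ}

private lemma E1 (hk : 4 ≤ k)
    (h4 : ∀ T : Finset (Fin k), T.card = 4 → ∀ y : Fin k → Bool,
      ∑ z ∈ Finset.univ.filter (fun z : Fin k → Bool => ∀ i ∈ T, z i = y i), D z = 1 / 2 ^ 4)
    (i : Fin k) : ∑ z, D z * chi z i = 0 := by
  have h := E0 hk h4 (U := {i}) ⟨i, by simp⟩ (by simp)
  simpa using h

private lemma E2 (hk : 4 ≤ k)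
    (h4 : ∀ T : Finset (Fin k), T.card = 4 → ∀ y : Fin k → Bool,
      ∑ z ∈ Finset.univ.filter (fun z : Fin k → Bool => ∀ i ∈ T, z i = y i), D z = 1 / 2 ^ 4)
    {i j : Fin k} (hij : i ≠ j) : ∑ z, D z * (chi z i * chi z j) = 0 := by
  have h := E0 hk h4 (U := {i, j}) ⟨i, by simp⟩
    (by rw [Finset.card_insert_of_notMem (by simp [hij]), Finset.card_singleton]; omega)
  simpa [Finset.prod_insert (by simp [hij] : i ∉ ({j} : Finset (Fin k)))] using h

private lemma E3 (hk : 4 ≤ k)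
    (h4 : ∀ T : Finset (Fin k), T.card = 4 → ∀ y : Fin k → Bool,
      ∑ z ∈ Finset.univ.filter (fun z : Fin k → Bool => ∀ i ∈ T, z i = y i), D z = 1 / 2 ^ 4)
    {i j l : Fin k} (hij : i ≠ j) (hil : i ≠ l) (hjl : j ≠ l) :
    ∑ z, D z * ((chi z i * chi z j) * chi z l) = 0 := by
  have hcard : ({i, j, l} : Finset (Fin k)).card = 3 := by
    rw [Finset.card_insert_of_notMem (by simp [hij, hil]),
        Finset.card_insert_of_notMem (by simp [hjl]), Finset.card_singleton]
  have h := E0 hk h4 (U := {i, j, l}) ⟨i, by simp⟩ (by omega)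
  have hexp : ∀ z : Fin k → Bool, (∏ x ∈ ({i, j, l} : Finset (Fin k)), chi z x)
      = (chi z i * chi z j) * chi z l := by
    intro z
    rw [Finset.prod_insert (by simp [hij, hil]), Finset.prod_insert (by simp [hjl]),
      Finset.prod_singleton]
    ring
  rw [Finset.sum_congr rfl (fun z _ => by rw [hexp z])] at h
  exact h

private lemma E4 (hk : 4 ≤ k)
    (h4 : ∀ T : Finset (Fin k), T.card = 4 → ∀ y : Fin k → Bool,
      ∑ z ∈ Finset.univ.filter (fun z : Fin k → Bool => ∀ i ∈ T, z i = y i), D z = 1 / 2 ^ 4)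
    {a b c d : Fin k} (hab : a ≠ b) (hac : a ≠ c) (had : a ≠ d) (hbc : b ≠ c)
    (hbd : b ≠ d) (hcd : c ≠ d) :
    ∑ z, D z * ((chi z a * chi z b) * (chi z c * chi z d)) = 0 := by
  have h := E0 hk h4 (U := {a, b, c, d}) ⟨a, by simp⟩
    (by rw [Finset.card_insert_of_notMem (by simp [hab, hac, had]),
            Finset.card_insert_of_notMem (by simp [hbc, hbd]),
            Finset.card_insert_of_notMem (by simp [hcd]), Finset.card_singleton])
  have hexp : ∀ z : Fin k → Bool, (∏ x ∈ ({a, b, c, d} : Finset (Fin k)), chi z x)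
      = (chi z a * chi z b) * (chi z c * chi z d) := by
    intro z
    rw [Finset.prod_insert (by simp [hab, hac, had]), Finset.prod_insert (by simp [hbc, hbd]),
      Finset.prod_insert (by simp [hcd]), Finset.prod_singleton]
    ring
  rw [Finset.sum_congr rfl (fun z _ => by rw [hexp z])] at h
  exact h

private lemma W2 (hk : 4 ≤ k) (hsum : ∑ z, D z = 1)
    (h4 : ∀ T : Finset (Fin k), T.card = 4 → ∀ y : Fin k → Bool,
      ∑ z ∈ Finset.univ.filter (fun z : Fin k → Bool => ∀ i ∈ T, z i = y i), D z = 1 / 2 ^ 4)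
    (a b : Fin k) :
    ∑ z, D z * (chi z a * chi z b) = if a = b then (1:ℝ) else 0 := by
  by_cases hab : a = b
  · subst hab
    rw [if_pos rfl]
    calc ∑ z, D z * (chi z a * chi z a) = ∑ z, D z :=
          Finset.sum_congr rfl fun z _ => by rw [chi_mul_self, mul_one]
      _ = 1 := hsum
  · rw [if_neg hab]; exact E2 hk h4 hab

private lemma W3 (hk : 4 ≤ k)
    (h4 : ∀ T : Finset (Fin k), T.card = 4 → ∀ y : Fin k → Bool,
      ∑ z ∈ Finset.univ.filter (fun z : Fin k → Bool => ∀ i ∈ T, z i = y i), D z = 1 / 2 ^ 4)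
    (a b c : Fin k) :
    ∑ z, D z * ((chi z a * chi z b) * chi z c) = 0 := by
  by_cases hab : a = b
  · subst hab
    calc ∑ z, D z * ((chi z a * chi z a) * chi z c) = ∑ z, D z * chi z c :=
          Finset.sum_congr rfl fun z _ => by rw [chi_mul_self, one_mul]
      _ = 0 := E1 hk h4 c
  · by_cases hac : a = c
    · subst hac
      calc ∑ z, D z * ((chi z a * chi z b) * chi z a) = ∑ z, D z * chi z b :=
            Finset.sum_congr rfl fun z _ => by
              rw [show (chi z a * chi z b) * chi z a = (chi z a * chi z a) * chi z b by ring,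
                chi_mul_self, one_mul]
        _ = 0 := E1 hk h4 b
    · by_cases hbc : b = c
      · subst hbc
        calc ∑ z, D z * ((chi z a * chi z b) * chi z b) = ∑ z, D z * chi z a :=
              Finset.sum_congr rfl fun z _ => by
                rw [show (chi z a * chi z b) * chi z b = (chi z b * chi z b) * chi z a by ring,
                  chi_mul_self, one_mul]
          _ = 0 := E1 hk h4 a
      · exact E3 hk h4 hab hac hbc

private lemma W4 (hk : 4 ≤ k) (hsum : ∑ z, D z = 1)
    (h4 : ∀ T : Finset (Fin k), T.card = 4 → ∀ y : Fin k → Bool,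
      ∑ z ∈ Finset.univ.filter (fun z : Fin k → Bool => ∀ i ∈ T, z i = y i), D z = 1 / 2 ^ 4)
    (a b c d : Fin k) :
    ∑ z, D z * ((chi z a * chi z b) * (chi z c * chi z d))
      = if (a = b ∧ c = d) ∨ (a = c ∧ b = d) ∨ (a = d ∧ b = c) then (1:ℝ) else 0 := by
  by_cases hab : a = b
  · subst hab
    by_cases hcd : c = d
    · subst hcd
      rw [if_pos (Or.inl ⟨rfl, rfl⟩)]
      calc ∑ z, D z * ((chi z a * chi z a) * (chi z c * chi z c)) = ∑ z, D z :=
            Finset.sum_congr rfl fun z _ => by rw [chi_mul_self, chi_mul_self, one_mul, mul_one]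
        _ = 1 := hsum
    · have hnot : ¬((a = a ∧ c = d) ∨ (a = c ∧ a = d) ∨ (a = d ∧ a = c)) := by
        rintro (⟨-, h⟩ | ⟨h1, h2⟩ | ⟨h1, h2⟩)
        exacts [hcd h, hcd (h1.symm.trans h2), hcd (h2.symm.trans h1)]
      rw [if_neg hnot]
      calc ∑ z, D z * ((chi z a * chi z a) * (chi z c * chi z d))
          = ∑ z, D z * (chi z c * chi z d) :=
            Finset.sum_congr rfl fun z _ => by rw [chi_mul_self, one_mul]
        _ = 0 := E2 hk h4 hcd
  · by_cases hac : a = c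
    · subst hac
      by_cases hbd : b = d
      · subst hbd
        rw [if_pos (Or.inr (Or.inl ⟨rfl, rfl⟩))]
        calc ∑ z, D z * ((chi z a * chi z b) * (chi z a * chi z b)) = ∑ z, D z :=
              Finset.sum_congr rfl fun z _ => by
                rw [show (chi z a * chi z b) * (chi z a * chi z b)
                    = (chi z a * chi z a) * (chi z b * chi z b) by ring,
                  chi_mul_self, chi_mul_self, one_mul, mul_one]
          _ = 1 := hsum
      · have hnot : ¬((a = b ∧ a = d) ∨ (a = a ∧ b = d) ∨ (a = d ∧ b = a)) := by
          rintro (⟨h, -⟩ | ⟨-, h⟩ | ⟨-, h⟩)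
          exacts [hab h, hbd h, hab h.symm]
        rw [if_neg hnot]
        calc ∑ z, D z * ((chi z a * chi z b) * (chi z a * chi z d))
            = ∑ z, D z * (chi z b * chi z d) :=
              Finset.sum_congr rfl fun z _ => by
                rw [show (chi z a * chi z b) * (chi z a * chi z d)
                    = (chi z a * chi z a) * (chi z b * chi z d) by ring,
                  chi_mul_self, one_mul]
          _ = 0 := E2 hk h4 hbd
    · by_cases had : a = d
      · subst had
        by_cases hbc : b = c
        · subst hbc
          rw [if_pos (Or.inr (Or.inr ⟨rfl, rfl⟩))]
          calc ∑ z, D z * ((chi z a * chi z b) * (chi z b * chi z a)) = ∑ z, D z :=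
                Finset.sum_congr rfl fun z _ => by
                  rw [show (chi z a * chi z b) * (chi z b * chi z a)
                      = (chi z a * chi z a) * (chi z b * chi z b) by ring,
                    chi_mul_self, chi_mul_self, one_mul, mul_one]
            _ = 1 := hsum
        · have hnot : ¬((a = b ∧ c = a) ∨ (a = c ∧ b = a) ∨ (a = a ∧ b = c)) := by
            rintro (⟨h, -⟩ | ⟨h, -⟩ | ⟨-, h⟩)
            exacts [hab h, hac h, hbc h]
          rw [if_neg hnot]
          calc ∑ z, D z * ((chi z a * chi z b) * (chi z c * chi z a))
              = ∑ z, D z * (chi z b * chi z c) :=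
                Finset.sum_congr rfl fun z _ => by
                  rw [show (chi z a * chi z b) * (chi z c * chi z a)
                      = (chi z a * chi z a) * (chi z b * chi z c) by ring,
                    chi_mul_self, one_mul]
            _ = 0 := E2 hk h4 hbc
      · have hnot : ¬((a = b ∧ c = d) ∨ (a = c ∧ b = d) ∨ (a = d ∧ b = c)) := by
          rintro (⟨h, -⟩ | ⟨h, -⟩ | ⟨h, -⟩)
          exacts [hab h, hac h, had h]
        rw [if_neg hnot]
        by_cases hbc : b = c
        · subst hbc
          calc ∑ z, D z * ((chi z a * chi z b) * (chi z b * chi z d))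
              = ∑ z, D z * (chi z a * chi z d) :=
                Finset.sum_congr rfl fun z _ => by
                  rw [show (chi z a * chi z b) * (chi z b * chi z d)
                      = (chi z b * chi z b) * (chi z a * chi z d) by ring,
                    chi_mul_self, one_mul]
            _ = 0 := E2 hk h4 had
        · by_cases hbd : b = d
          · subst hbd
            calc ∑ z, D z * ((chi z a * chi z b) * (chi z c * chi z b))
                = ∑ z, D z * (chi z a * chi z c) :=
                  Finset.sum_congr rfl fun z _ => by
                    rw [show (chi z a * chi z b) * (chi z c * chi z b)
                        = (chi z b * chi z b) * (chi z a * chi z c) by ring,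
                      chi_mul_self, one_mul]
              _ = 0 := E2 hk h4 hac
          · by_cases hcd : c = d
            · subst hcd
              calc ∑ z, D z * ((chi z a * chi z b) * (chi z c * chi z c))
                  = ∑ z, D z * (chi z a * chi z b) :=
                    Finset.sum_congr rfl fun z _ => by rw [chi_mul_self, mul_one]
                _ = 0 := E2 hk h4 hab
            · exact E4 hk h4 hab hac had hbc hbd hcd

end Moments

private lemma count_inner {k : ℕ} (a c : Fin k) :
    (∑ b : Fin k, ∑ d : Fin k,
      (if (a = b ∧ c = d) ∨ (a = c ∧ b = d) ∨ (a = d ∧ b = c) then (1:ℝ) else 0))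
      = if a = c then (k:ℝ) else 2 := by
  by_cases hac : a = c
  · subst hac
    rw [if_pos rfl]
    have hiff : ∀ b d : Fin k,
        ((a = b ∧ a = d) ∨ (a = a ∧ b = d) ∨ (a = d ∧ b = a)) ↔ b = d := by
      intro b d
      constructor
      · rintro (⟨h1, h2⟩ | ⟨-, h⟩ | ⟨h1, h2⟩)
        exacts [h1.symm.trans h2, h, h2.trans h1]
      · intro h; exact Or.inr (Or.inl ⟨rfl, h⟩)
    calc (∑ b : Fin k, ∑ d : Fin k,
          (if (a = b ∧ a = d) ∨ (a = a ∧ b = d) ∨ (a = d ∧ b = a) then (1:ℝ) else 0))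
        = ∑ b : Fin k, ∑ d : Fin k, (if b = d then (1:ℝ) else 0) := by
          refine Finset.sum_congr rfl fun b _ => Finset.sum_congr rfl fun d _ => ?_
          exact if_congr (hiff b d) rfl rfl
      _ = ∑ _b : Fin k, (1:ℝ) := by
          refine Finset.sum_congr rfl fun b _ => ?_
          rw [Finset.sum_ite_eq Finset.univ b (fun _ => (1:ℝ))]
          simp
      _ = (k:ℝ) := by simp
  · rw [if_neg hac]
    have hsplit : ∀ b d : Fin k,
        (if (a = b ∧ c = d) ∨ (a = c ∧ b = d) ∨ (a = d ∧ b = c) then (1:ℝ) else 0)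
          = (if b = a then (1:ℝ) else 0) * (if d = c then (1:ℝ) else 0)
            + (if b = c then (1:ℝ) else 0) * (if d = a then (1:ℝ) else 0) := by
      intro b d
      by_cases h1 : b = a <;> by_cases h2 : b = c <;> by_cases h3 : d = c <;>
        by_cases h4 : d = a <;> simp_all [eq_comm]
    calc (∑ b : Fin k, ∑ d : Fin k,
          (if (a = b ∧ c = d) ∨ (a = c ∧ b = d) ∨ (a = d ∧ b = c) then (1:ℝ) else 0))
        = ∑ b : Fin k, ∑ d : Fin k,
            ((if b = a then (1:ℝ) else 0) * (if d = c then (1:ℝ) else 0)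
              + (if b = c then (1:ℝ) else 0) * (if d = a then (1:ℝ) else 0)) := by
          exact Finset.sum_congr rfl fun b _ => Finset.sum_congr rfl fun d _ => hsplit b d
      _ = ∑ b : Fin k, ((if b = a then (1:ℝ) else 0) + (if b = c then (1:ℝ) else 0)) := by
          refine Finset.sum_congr rfl fun b _ => ?_
          rw [Finset.sum_add_distrib, ← Finset.mul_sum, ← Finset.mul_sum,
            Finset.sum_ite_eq' Finset.univ c (fun _ => (1:ℝ)),
            Finset.sum_ite_eq' Finset.univ a (fun _ => (1:ℝ))]
          simp
      _ = 2 := by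
          rw [Finset.sum_add_distrib,
            Finset.sum_ite_eq' Finset.univ a (fun _ => (1:ℝ)),
            Finset.sum_ite_eq' Finset.univ c (fun _ => (1:ℝ))]
          norm_num

private lemma count_outer {k : ℕ} :
    (∑ _a : Fin k, ∑ c : Fin k, (if _a = c then (k:ℝ) else 2)) = 3*(k:ℝ)^2 - 2*(k:ℝ) := by
  have hpt : ∀ a c : Fin k, (if a = c then (k:ℝ) else 2) = 2 + (if a = c then (k:ℝ) - 2 else 0) := by
    intro a c; by_cases h : a = c <;> simp [h]
  calc (∑ _a : Fin k, ∑ c : Fin k, (if _a = c then (k:ℝ) else 2))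
      = ∑ _a : Fin k, (2*(k:ℝ) + ((k:ℝ) - 2)) := by
        refine Finset.sum_congr rfl fun a _ => ?_
        rw [Finset.sum_congr rfl fun c _ => hpt a c, Finset.sum_add_distrib,
          Finset.sum_const, Finset.sum_ite_eq Finset.univ a (fun _ => (k:ℝ) - 2)]
        simp [Finset.card_univ, mul_comm]
    _ = (k:ℝ) * (2*(k:ℝ) + ((k:ℝ) - 2)) := by
        rw [Finset.sum_const]; simp [Finset.card_univ]; ring
    _ = 3*(k:ℝ)^2 - 2*(k:ℝ) := by ring

private lemma ex2 {k : ℕ} (F : (Fin k → Bool) → Fin k → Fin k → ℝ) :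
    (∑ z, ∑ a, ∑ b, F z a b) = ∑ a, ∑ b, ∑ z, F z a b := by
  rw [Finset.sum_comm]
  exact Finset.sum_congr rfl fun a _ => Finset.sum_comm

private lemma ex3 {k : ℕ} (F : (Fin k → Bool) → Fin k → Fin k → Fin k → ℝ) :
    (∑ z, ∑ a, ∑ b, ∑ c, F z a b c) = ∑ a, ∑ b, ∑ c, ∑ z, F z a b c := by
  rw [Finset.sum_comm]
  exact Finset.sum_congr rfl fun a _ => ex2 (fun z b c => F z a b c)

private lemma ex4 {k : ℕ} (F : (Fin k → Bool) → Fin k → Fin k → Fin k → Fin k → ℝ) :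
    (∑ z, ∑ a, ∑ b, ∑ c, ∑ d, F z a b c d) = ∑ a, ∑ b, ∑ c, ∑ d, ∑ z, F z a b c d := by
  rw [Finset.sum_comm]
  exact Finset.sum_congr rfl fun a _ => ex3 (fun z b c d => F z a b c d)

section MomentVals

variable {k : ℕ} {D : (Fin k → Bool) → ℝ}

private lemma sq_expand {k : ℕ} (z : Fin k → Bool) :
    (∑ i, chi z i) * (∑ i, chi z i) = ∑ a, ∑ b, chi z a * chi z b :=
  Finset.sum_mul_sum _ _ _ _

private lemma cube_expand {k : ℕ} (z : Fin k → Bool) :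
    (∑ i, chi z i)^3 = ∑ a, ∑ c, ∑ b, (chi z a * chi z b) * chi z c := by
  calc (∑ i, chi z i)^3 = ((∑ i, chi z i) * (∑ i, chi z i)) * (∑ i, chi z i) := by ring
    _ = (∑ a, ∑ b, chi z a * chi z b) * (∑ c, chi z c) := by rw [sq_expand]
    _ = ∑ a, ∑ c, (∑ b, chi z a * chi z b) * chi z c := Finset.sum_mul_sum _ _ _ _
    _ = ∑ a, ∑ c, ∑ b, (chi z a * chi z b) * chi z c :=
        Finset.sum_congr rfl fun a _ => Finset.sum_congr rfl fun c _ => Finset.sum_mul _ _ _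

private lemma quart_expand {k : ℕ} (z : Fin k → Bool) :
    (∑ i, chi z i)^4 = ∑ a, ∑ c, ∑ b, ∑ d, (chi z a * chi z b) * (chi z c * chi z d) := by
  calc (∑ i, chi z i)^4
      = ((∑ i, chi z i) * (∑ i, chi z i)) * ((∑ i, chi z i) * (∑ i, chi z i)) := by ring
    _ = (∑ a, ∑ b, chi z a * chi z b) * (∑ c, ∑ d, chi z c * chi z d) := by rw [sq_expand]
    _ = ∑ a, ∑ c, (∑ b, chi z a * chi z b) * (∑ d, chi z c * chi z d) :=
        Finset.sum_mul_sum _ _ _ _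
    _ = ∑ a, ∑ c, ∑ b, ∑ d, (chi z a * chi z b) * (chi z c * chi z d) :=
        Finset.sum_congr rfl fun a _ => Finset.sum_congr rfl fun c _ =>
          Finset.sum_mul_sum _ _ _ _

private lemma Mom1 (hk : 4 ≤ k)
    (h4 : ∀ T : Finset (Fin k), T.card = 4 → ∀ y : Fin k → Bool,
      ∑ z ∈ Finset.univ.filter (fun z : Fin k → Bool => ∀ i ∈ T, z i = y i), D z = 1 / 2 ^ 4) :
    ∑ z, D z * (∑ i, chi z i) = 0 := by
  calc ∑ z, D z * (∑ i, chi z i) = ∑ z, ∑ i, D z * chi z i :=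
        Finset.sum_congr rfl fun z _ => Finset.mul_sum _ _ _
    _ = ∑ i, ∑ z, D z * chi z i := Finset.sum_comm
    _ = 0 := Finset.sum_eq_zero fun i _ => E1 hk h4 i

private lemma Mom2 (hk : 4 ≤ k) (hsum : ∑ z, D z = 1)
    (h4 : ∀ T : Finset (Fin k), T.card = 4 → ∀ y : Fin k → Bool,
      ∑ z ∈ Finset.univ.filter (fun z : Fin k → Bool => ∀ i ∈ T, z i = y i), D z = 1 / 2 ^ 4) :
    ∑ z, D z * (∑ i, chi z i)^2 = (k:ℝ) := by
  calc ∑ z, D z * (∑ i, chi z i)^2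
      = ∑ z, ∑ a, ∑ b, D z * (chi z a * chi z b) := by
        refine Finset.sum_congr rfl fun z _ => ?_
        rw [show (∑ i, chi z i)^2 = (∑ i, chi z i) * (∑ i, chi z i) by ring, sq_expand]
        rw [Finset.mul_sum]
        exact Finset.sum_congr rfl fun a _ => Finset.mul_sum _ _ _
    _ = ∑ a, ∑ b, ∑ z, D z * (chi z a * chi z b) := ex2 _
    _ = ∑ a : Fin k, ∑ b : Fin k, (if a = b then (1:ℝ) else 0) :=
        Finset.sum_congr rfl fun a _ => Finset.sum_congr rfl fun b _ => W2 hk hsum h4 a b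
    _ = ∑ _a : Fin k, (1:ℝ) := by
        refine Finset.sum_congr rfl fun a _ => ?_
        rw [Finset.sum_ite_eq Finset.univ a (fun _ => (1:ℝ))]
        simp
    _ = (k:ℝ) := by simp

private lemma Mom3 (hk : 4 ≤ k)
    (h4 : ∀ T : Finset (Fin k), T.card = 4 → ∀ y : Fin k → Bool,
      ∑ z ∈ Finset.univ.filter (fun z : Fin k → Bool => ∀ i ∈ T, z i = y i), D z = 1 / 2 ^ 4) :
    ∑ z, D z * (∑ i, chi z i)^3 = 0 := by
  calc ∑ z, D z * (∑ i, chi z i)^3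
      = ∑ z, ∑ a, ∑ c, ∑ b, D z * ((chi z a * chi z b) * chi z c) := by
        refine Finset.sum_congr rfl fun z _ => ?_
        rw [cube_expand]
        simp only [Finset.mul_sum]
    _ = ∑ a, ∑ c, ∑ b, ∑ z, D z * ((chi z a * chi z b) * chi z c) := ex3 _
    _ = 0 := Finset.sum_eq_zero fun a _ => Finset.sum_eq_zero fun c _ =>
          Finset.sum_eq_zero fun b _ => W3 hk h4 a b c

private lemma Mom4 (hk : 4 ≤ k) (hsum : ∑ z, D z = 1)
    (h4 : ∀ T : Finset (Fin k), T.card = 4 → ∀ y : Fin k → Bool,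
      ∑ z ∈ Finset.univ.filter (fun z : Fin k → Bool => ∀ i ∈ T, z i = y i), D z = 1 / 2 ^ 4) :
    ∑ z, D z * (∑ i, chi z i)^4 = 3*(k:ℝ)^2 - 2*(k:ℝ) := by
  calc ∑ z, D z * (∑ i, chi z i)^4
      = ∑ z, ∑ a, ∑ c, ∑ b, ∑ d, D z * ((chi z a * chi z b) * (chi z c * chi z d)) := by
        refine Finset.sum_congr rfl fun z _ => ?_
        rw [quart_expand]
        simp only [Finset.mul_sum]
    _ = ∑ a, ∑ c, ∑ b, ∑ d, ∑ z, D z * ((chi z a * chi z b) * (chi z c * chi z d)) := ex4 _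
    _ = ∑ a : Fin k, ∑ c : Fin k, ∑ b : Fin k, ∑ d : Fin k,
          (if (a = b ∧ c = d) ∨ (a = c ∧ b = d) ∨ (a = d ∧ b = c) then (1:ℝ) else 0) :=
        Finset.sum_congr rfl fun a _ => Finset.sum_congr rfl fun c _ =>
          Finset.sum_congr rfl fun b _ => Finset.sum_congr rfl fun d _ => W4 hk hsum h4 a b c d
    _ = ∑ a : Fin k, ∑ c : Fin k, (if a = c then (k:ℝ) else 2) :=
        Finset.sum_congr rfl fun a _ => Finset.sum_congr rfl fun c _ => count_inner a c
    _ = 3*(k:ℝ)^2 - 2*(k:ℝ) := count_outer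

end MomentVals

/-- for odd `k ≥ 25`, the Majority predicate on `{-1,1}^k` (true iff the
signed Hamming weight is ≥ 1) is `(9/73)`-far from supporting a 4-wise uniform
distribution; in particular it supports no 4-wise uniform distribution. -/
theorem majority_far_from_fourwise (k : ℕ) (hodd : Odd k) (hk : 25 ≤ k) :
    (∀ D : (Fin k → Bool) → ℝ,
        (∀ z, 0 ≤ D z) → (∑ z, D z = 1) →
        (∀ T : Finset (Fin k), T.card = 4 → ∀ y : Fin k → Bool,
          ∑ z ∈ Finset.univ.filter (fun z : Fin k → Bool => ∀ i ∈ T, z i = y i), D z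
            = 1 / 2 ^ 4) →
        (9 : ℝ) / 73
          ≤ ∑ z ∈ Finset.univ.filter
              (fun z : Fin k → Bool => ¬ ((1 : ℤ) ≤ ∑ i, (if z i then (1:ℤ) else -1))),
              D z) ∧
    ¬ ∃ D : (Fin k → Bool) → ℝ,
        (∀ z, 0 ≤ D z) ∧ (∑ z, D z = 1) ∧
        (∀ T : Finset (Fin k), T.card = 4 → ∀ y : Fin k → Bool,
          ∑ z ∈ Finset.univ.filter (fun z : Fin k → Bool => ∀ i ∈ T, z i = y i), D z
            = 1 / 2 ^ 4) ∧
        (∀ z, D z ≠ 0 → (1 : ℤ) ≤ ∑ i, (if z i then (1:ℤ) else -1)) := by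
  classical
  have hk4 : 4 ≤ k := by omega
  have main : ∀ D : (Fin k → Bool) → ℝ,
      (∀ z, 0 ≤ D z) → (∑ z, D z = 1) →
      (∀ T : Finset (Fin k), T.card = 4 → ∀ y : Fin k → Bool,
        ∑ z ∈ Finset.univ.filter (fun z : Fin k → Bool => ∀ i ∈ T, z i = y i), D z
          = 1 / 2 ^ 4) →
      (9 : ℝ) / 73
        ≤ ∑ z ∈ Finset.univ.filter
            (fun z : Fin k → Bool => ¬ ((1 : ℤ) ≤ ∑ i, (if z i then (1:ℤ) else -1))),
            D z := by
    intro D hpos hsum h4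
    set r := Real.sqrt (k:ℝ) with hrdef
    have hk25 : (25:ℝ) ≤ (k:ℝ) := by exact_mod_cast hk
    have hr2 : r^2 = (k:ℝ) := Real.sq_sqrt (by positivity)
    have hr5 : (5:ℝ) ≤ r := by
      have h := Real.sqrt_le_sqrt hk25
      rwa [show (25:ℝ) = 5^2 by norm_num, Real.sqrt_sq (by norm_num : (0:ℝ) ≤ 5)] at h
    -- expectation of the dual polynomial vanishes
    have hEP : ∑ z, D z * (3*(∑ i, chi z i)^4 - 5*r*(∑ i, chi z i)^3
        + (24-18*r^2)*(∑ i, chi z i)^2 + (31*r^3-10*r)*(∑ i, chi z i) + (9*r^4-18*r^2)) = 0 := by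
      have hsplit : ∑ z, D z * (3*(∑ i, chi z i)^4 - 5*r*(∑ i, chi z i)^3
          + (24-18*r^2)*(∑ i, chi z i)^2 + (31*r^3-10*r)*(∑ i, chi z i) + (9*r^4-18*r^2))
          = 3*(∑ z, D z * (∑ i, chi z i)^4) - 5*r*(∑ z, D z * (∑ i, chi z i)^3)
            + (24-18*r^2)*(∑ z, D z * (∑ i, chi z i)^2)
            + (31*r^3-10*r)*(∑ z, D z * (∑ i, chi z i)) + (9*r^4-18*r^2)*(∑ z, D z) := by
        calc ∑ z, D z * (3*(∑ i, chi z i)^4 - 5*r*(∑ i, chi z i)^3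
              + (24-18*r^2)*(∑ i, chi z i)^2 + (31*r^3-10*r)*(∑ i, chi z i) + (9*r^4-18*r^2))
            = ∑ z, (3*(D z * (∑ i, chi z i)^4) - 5*r*(D z * (∑ i, chi z i)^3)
              + (24-18*r^2)*(D z * (∑ i, chi z i)^2)
              + (31*r^3-10*r)*(D z * (∑ i, chi z i)) + (9*r^4-18*r^2)*(D z)) :=
              Finset.sum_congr rfl fun z _ => by ring
          _ = _ := by
              rw [Finset.sum_add_distrib, Finset.sum_add_distrib, Finset.sum_add_distrib,
                Finset.sum_sub_distrib, ← Finset.mul_sum, ← Finset.mul_sum, ← Finset.mul_sum,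
                ← Finset.mul_sum, ← Finset.mul_sum]
      rw [hsplit, Mom1 hk4 h4, Mom2 hk4 hsum h4, Mom3 hk4 h4, Mom4 hk4 hsum h4, hsum]
      linear_combination (9*r^2 - 9*(k:ℝ) - 18) * hr2
    -- cast of the signed weight
    have hcast : ∀ z : Fin k → Bool,
        (((∑ i, (if z i then (1:ℤ) else -1)) : ℤ) : ℝ) = ∑ i, chi z i := by
      intro z
      push_cast
      exact Finset.sum_congr rfl fun i _ => by by_cases h : z i <;> simp [chi, h]
    -- split according to majority
    have hfilter := Finset.sum_filter_add_sum_filter_not Finset.univ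
      (fun z : Fin k → Bool => (1:ℤ) ≤ ∑ i, (if z i then (1:ℤ) else -1))
      (fun z => D z * (3*(∑ i, chi z i)^4 - 5*r*(∑ i, chi z i)^3
        + (24-18*r^2)*(∑ i, chi z i)^2 + (31*r^3-10*r)*(∑ i, chi z i) + (9*r^4-18*r^2)))
    have hfilterD := Finset.sum_filter_add_sum_filter_not Finset.univ
      (fun z : Fin k → Bool => (1:ℤ) ≤ ∑ i, (if z i then (1:ℤ) else -1)) D
    rw [hsum] at hfilterD
    rw [hEP] at hfilter
    have hA : (27/4*r^4) * (∑ z ∈ Finset.univ.filter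
          (fun z : Fin k → Bool => (1:ℤ) ≤ ∑ i, (if z i then (1:ℤ) else -1)), D z)
        ≤ ∑ z ∈ Finset.univ.filter
          (fun z : Fin k → Bool => (1:ℤ) ≤ ∑ i, (if z i then (1:ℤ) else -1)),
          D z * (3*(∑ i, chi z i)^4 - 5*r*(∑ i, chi z i)^3
            + (24-18*r^2)*(∑ i, chi z i)^2 + (31*r^3-10*r)*(∑ i, chi z i) + (9*r^4-18*r^2)) := by
      rw [Finset.mul_sum]
      refine Finset.sum_le_sum fun z hz => ?_
      have hz1 : (1:ℤ) ≤ ∑ i, (if z i then (1:ℤ) else -1) := (Finset.mem_filter.mp hz).2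
      have hz2 : (1:ℝ) ≤ ∑ i, chi z i := by
        have h5 : ((1:ℤ):ℝ) ≤ (((∑ i, (if z i then (1:ℤ) else -1)) : ℤ) : ℝ) :=
          Int.cast_le.mpr hz1
        rw [hcast z] at h5
        simpa using h5
      rw [mul_comm]
      exact mul_le_mul_of_nonneg_left (lemA _ r hz2 hr5) (hpos z)
    have hB : (-(48*r^4)) * (∑ z ∈ Finset.univ.filter
          (fun z : Fin k → Bool => ¬ ((1:ℤ) ≤ ∑ i, (if z i then (1:ℤ) else -1))), D z)
        ≤ ∑ z ∈ Finset.univ.filter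
          (fun z : Fin k → Bool => ¬ ((1:ℤ) ≤ ∑ i, (if z i then (1:ℤ) else -1))),
          D z * (3*(∑ i, chi z i)^4 - 5*r*(∑ i, chi z i)^3
            + (24-18*r^2)*(∑ i, chi z i)^2 + (31*r^3-10*r)*(∑ i, chi z i) + (9*r^4-18*r^2)) := by
      rw [Finset.mul_sum]
      refine Finset.sum_le_sum fun z hz => ?_
      rw [mul_comm]
      exact mul_le_mul_of_nonneg_left (lemB _ r hr5) (hpos z)
    have hmu0 : 0 ≤ ∑ z ∈ Finset.univ.filter
        (fun z : Fin k → Bool => ¬ ((1:ℤ) ≤ ∑ i, (if z i then (1:ℤ) else -1))), D z :=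
      Finset.sum_nonneg fun z _ => hpos z
    have hr0 : (0:ℝ) < r := by linarith
    have hr4 : (0:ℝ) < r^4 := by positivity
    set mu := ∑ z ∈ Finset.univ.filter
        (fun z : Fin k → Bool => ¬ ((1:ℤ) ≤ ∑ i, (if z i then (1:ℤ) else -1))), D z with hmudef
    have hgood : (∑ z ∈ Finset.univ.filter
        (fun z : Fin k → Bool => (1:ℤ) ≤ ∑ i, (if z i then (1:ℤ) else -1)), D z) = 1 - mu := by
      linarith
    rw [hgood] at hA
    by_contra hcon
    push_neg at hcon
    have hpos' : 0 < 27/4*r^4*(1 - mu) - 48*r^4*mu := by nlinarith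
    linarith
  refine ⟨main, ?_⟩
  rintro ⟨D, hpos, hsum, h4, hsupp⟩
  have h2 : (∑ z ∈ Finset.univ.filter
      (fun z : Fin k → Bool => ¬ ((1:ℤ) ≤ ∑ i, (if z i then (1:ℤ) else -1))), D z) = 0 := by
    refine Finset.sum_eq_zero fun z hz => ?_
    rcases Finset.mem_filter.mp hz with ⟨-, hz2⟩
    by_contra hD
    exact hz2 (hsupp z hD)
  have h3 := main D hpos hsum h4
  rw [h2] at h3
  norm_num at h3
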